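/- arXiv:1607.04350 — 5 statements merged into one kernel-verified Lean document; each statement's English description precedes it below -/
import Mathlib

section
/- For integers M ≥ 2 and N ≥ 2, the lower bound N/(M(N−1)+1) is at most the upper bound (N(M−1)/(M^N − 1))^{1/(N−1)}, with equality when N = 2. -/
/-!
With n = N - 1 and x = M, raising to the n-th power reduces the inequality to
(n + 1)^n (1 + x + ⋯ + x^n) ≤ (n + 1) (n x + 1)^n. The coefficients C(n, k) n^k of (n x + 1)^n
sum to (n + 1)^n and increase with k, as do the powers x^k for x ≥ 1, so this is Chebyshev's sum
inequality. For n = 1 both sides of the original inequality are 2 / (M + 1).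
-/

open Finset

theorem Nat.choose_mul_pow_self_monotoneOn (n : ℕ) :
    MonotoneOn (fun k ↦ n.choose k * n ^ k) (Set.Iio (n + 1)) := by
  refine monotoneOn_of_le_succ Set.ordConnected_Iio fun k _ _ hk ↦ ?_
  simp only [Order.succ_eq_add_one, Set.mem_Iio] at hk
  have hkn : k + 1 ≤ (n - k) * n := by
    calc k + 1 ≤ n := by omega
      _ ≤ (n - k) * n := Nat.le_mul_of_pos_left n (by omega)
  refine Nat.le_of_mul_le_mul_right ?_ k.succ_pos
  calc n.choose k * n ^ k * (k + 1) ≤ n.choose k * n ^ k * ((n - k) * n) := by gcongr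
    _ = n.choose (k + 1) * (k + 1) * n ^ (k + 1) := by rw [Nat.choose_succ_right_eq]; ring
    _ = n.choose (k + 1) * n ^ (k + 1) * (k + 1) := by ring

theorem add_one_pow_mul_geom_sum_le (n : ℕ) {x : ℝ} (hx : 1 ≤ x) :
    ((n : ℝ) + 1) ^ n * ∑ k ∈ range (n + 1), x ^ k ≤ (n + 1) * (n * x + 1) ^ n := by
  have hmonovary : MonovaryOn (fun k ↦ (n.choose k * n ^ k : ℝ)) (x ^ ·) (range (n + 1)) := by
    rw [coe_range]
    refine MonotoneOn.monovaryOn ?_ ((pow_right_mono₀ hx).monotoneOn _)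
    exact_mod_cast (Nat.mono_cast (α := ℝ)).comp_monotoneOn n.choose_mul_pow_self_monotoneOn
  have hcoeff : ∑ k ∈ range (n + 1), (n.choose k * n ^ k : ℝ) = ((n : ℝ) + 1) ^ n := by
    rw [add_pow]; simp [mul_comm]
  have hbinom : ((n : ℝ) * x + 1) ^ n = ∑ k ∈ range (n + 1), (n.choose k * n ^ k : ℝ) * x ^ k := by
    rw [add_pow]; refine sum_congr rfl fun k _ ↦ ?_; rw [mul_pow]; ring
  simpa [hcoeff, hbinom] using hmonovary.sum_mul_sum_le_card_mul_sum

theorem add_one_div_pow_le (n : ℕ) {x : ℝ} (hx : 1 < x) :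
    (((n : ℝ) + 1) / (x * n + 1)) ^ n ≤ ((n : ℝ) + 1) * (x - 1) / (x ^ (n + 1) - 1) := by
  have hpow : 0 < x ^ (n + 1) - 1 := sub_pos.2 (one_lt_pow₀ hx n.succ_ne_zero)
  rw [div_pow, div_le_div_iff₀ (by positivity) hpow, ← geom_sum_mul, mul_comm x]
  calc ((n : ℝ) + 1) ^ n * ((∑ k ∈ range (n + 1), x ^ k) * (x - 1))
      ≤ (n + 1) * (n * x + 1) ^ n * (x - 1) := by
        rw [← mul_assoc]
        exact mul_le_mul_of_nonneg_right (add_one_pow_mul_geom_sum_le n hx.le) (by linarith)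
    _ = (n + 1) * (x - 1) * (n * x + 1) ^ n := by ring

theorem lower_le_upper (M N : ℕ) (hM : 2 ≤ M) (hN : 2 ≤ N) :
    (N : ℝ) / ((M : ℝ) * (N - 1) + 1) ≤
      (((N : ℝ) * ((M : ℝ) - 1)) / ((M : ℝ) ^ N - 1)) ^ ((1 : ℝ) / (N - 1)) ∧
    (N = 2 →
      (N : ℝ) / ((M : ℝ) * (N - 1) + 1) =
        (((N : ℝ) * ((M : ℝ) - 1)) / ((M : ℝ) ^ N - 1)) ^ ((1 : ℝ) / (N - 1))) := by
  have hM1 : (1 : ℝ) < M := by exact_mod_cast hM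
  obtain ⟨n, rfl⟩ : ∃ n, N = n + 1 := ⟨N - 1, by omega⟩
  have hn : (0 : ℝ) < n := by exact_mod_cast (by omega : 0 < n)
  push_cast
  rw [add_sub_cancel_right, one_div]
  refine ⟨?_, fun h ↦ ?_⟩
  · rw [Real.le_rpow_inv_iff_of_pos (by positivity)
      (div_nonneg (by positivity) (sub_nonneg.2 (one_le_pow₀ hM1.le))) hn, Real.rpow_natCast]
    exact add_one_div_pow_le n hM1
  · obtain rfl : n = 1 := by omega
    rw [Nat.cast_one, inv_one, Real.rpow_one, div_eq_div_iff (by positivity)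
      (sub_pos.2 (one_lt_pow₀ hM1 (by norm_num))).ne']
    ring
end

section
/- Monotonicity of LHV simulability in detector efficiency: if 0 < η1 < η2 ≤ 1 and the efficiency-η2 version p^{NS}_{η2} of a no-signaling distribution p^{NS} admits an LHV model, then the efficiency-η1 version p^{NS}_{η1} also admits an LHV model. -/
/-- The detector-efficiency-`η` version of a bipartite no-signaling distribution `p`
with single-party marginals `pA`, `pB`; `none` is the non-detection outcome Φ. -/
def effDist {A B X Y : Type} (p : A → B → X → Y → ℝ)
    (pA : A → X → ℝ) (pB : B → Y → ℝ) (η : ℝ) :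
    Option A → Option B → X → Y → ℝ
  | some a, some b, x, y => η ^ 2 * p a b x y
  | some a, none, x, _ => η * (1 - η) * pA a x
  | none, some b, _, y => η * (1 - η) * pB b y
  | none, none, _, _ => (1 - η) ^ 2

/-- A distribution over outcomes (including Φ) admits a local hidden variable model. -/
def IsLHV {A B X Y : Type} [Fintype A] [Fintype B]
    (q : Option A → Option B → X → Y → ℝ) : Prop :=
  ∃ (n : ℕ) (μ : Fin n → ℝ) (pa : Option A → X → Fin n → ℝ)
      (pb : Option B → Y → Fin n → ℝ),
    (∀ l, 0 ≤ μ l) ∧ (∑ l, μ l = 1) ∧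
    (∀ a x l, 0 ≤ pa a x l) ∧ (∀ x l, ∑ a : Option A, pa a x l = 1) ∧
    (∀ b y l, 0 ≤ pb b y l) ∧ (∀ y l, ∑ b : Option B, pb b y l = 1) ∧
    (∀ a b x y, q a b x y = ∑ l, μ l * pa a x l * pb b y l)

/-! Mixing each party's response, with weight `1 - t`, with the deterministic response `Φ` thins
the detections exactly as lowering the efficiency from `η` to `t η` does:
`p_{tη} = t² p_η + t (1 - t) (p_η^A ⊗ δ_Φ + δ_Φ ⊗ p_η^B) + (1 - t)² δ_Φ ⊗ δ_Φ`,
where `p_η^A`, `p_η^B` are the marginals of `p_η`. The marginals of an LHV model are the averages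
of its response functions, so the mixed responses for `t = η₁ / η₂` are an LHV model of `p_{η₁}`. -/

open Finset

def nonDetection {A : Type*} (a : Option A) : ℝ := a.elim 1 fun _ => 0

@[simp] lemma nonDetection_none {A : Type*} : nonDetection (none : Option A) = 1 := rfl

@[simp] lemma nonDetection_some {A : Type*} (a : A) : nonDetection (some a) = 0 := rfl

lemma sum_nonDetection {A : Type*} [Fintype A] : ∑ a : Option A, nonDetection a = 1 := by
  simp [Fintype.sum_option]

section Thinning

variable {A X ι : Type*}

def thinResponse (t : ℝ) (pa : Option A → X → ι → ℝ) (a : Option A) (x : X) (l : ι) : ℝ :=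
  t * pa a x l + (1 - t) * nonDetection a

lemma thinResponse_nonneg {t : ℝ} (ht0 : 0 ≤ t) (ht1 : t ≤ 1) {pa : Option A → X → ι → ℝ}
    (hpa : ∀ a x l, 0 ≤ pa a x l) (a : Option A) (x : X) (l : ι) :
    0 ≤ thinResponse t pa a x l := by
  have hΦ : 0 ≤ nonDetection a := by cases a <;> simp
  have hpa' := hpa a x l
  unfold thinResponse
  positivity

lemma sum_thinResponse [Fintype A] (t : ℝ) {pa : Option A → X → ι → ℝ}
    (hpa : ∀ x l, ∑ a, pa a x l = 1) (x : X) (l : ι) :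
    ∑ a, thinResponse t pa a x l = 1 := by
  simp only [thinResponse, sum_add_distrib, ← mul_sum, hpa, sum_nonDetection]
  ring

lemma sum_mul_thinResponse_mul_thinResponse {B Y : Type*} [Fintype ι] (μ : ι → ℝ) (t : ℝ)
    (pa : Option A → X → ι → ℝ) (pb : Option B → Y → ι → ℝ)
    (a : Option A) (b : Option B) (x : X) (y : Y) :
    ∑ l, μ l * thinResponse t pa a x l * thinResponse t pb b y l =
      t ^ 2 * ∑ l, μ l * pa a x l * pb b y l
        + t * (1 - t) * nonDetection b * ∑ l, μ l * pa a x l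
        + t * (1 - t) * nonDetection a * ∑ l, μ l * pb b y l
        + (1 - t) ^ 2 * nonDetection a * nonDetection b * ∑ l, μ l := by
  simp only [mul_sum, ← sum_add_distrib]
  exact sum_congr rfl fun l _ => by unfold thinResponse; ring

end Thinning

section Marginals

variable {A B X Y ι : Type*} [Fintype ι] {q : A → B → X → Y → ℝ} {μ : ι → ℝ}
  {pa : A → X → ι → ℝ} {pb : B → Y → ι → ℝ}

lemma lhv_marginal_fst [Fintype B] (hq : ∀ a b x y, q a b x y = ∑ l, μ l * pa a x l * pb b y l)
    (hpb : ∀ y l, ∑ b, pb b y l = 1) (a : A) (x : X) (y : Y) :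
    ∑ b, q a b x y = ∑ l, μ l * pa a x l := by
  simp only [hq, sum_comm (γ := B), ← mul_sum, hpb, mul_one]

lemma lhv_marginal_snd [Fintype A] (hq : ∀ a b x y, q a b x y = ∑ l, μ l * pa a x l * pb b y l)
    (hpa : ∀ x l, ∑ a, pa a x l = 1) (b : B) (x : X) (y : Y) :
    ∑ a, q a b x y = ∑ l, μ l * pb b y l := by
  simp only [hq, sum_comm (γ := A), mul_right_comm _ (pa _ x _), ← mul_sum, hpa, mul_one]

end Marginals

def effMarginal {A X : Type} (pA : A → X → ℝ) (η : ℝ) : Option A → X → ℝ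
  | some a, x => η * pA a x
  | none, _ => 1 - η

section Efficiency

variable {A B X Y : Type} (p : A → B → X → Y → ℝ) (pA : A → X → ℝ) (pB : B → Y → ℝ)

lemma effDist_mul (t η : ℝ) (a : Option A) (b : Option B) (x : X) (y : Y) :
    effDist p pA pB (t * η) a b x y =
      t ^ 2 * effDist p pA pB η a b x y
        + t * (1 - t) * nonDetection b * effMarginal pA η a x
        + t * (1 - t) * nonDetection a * effMarginal pB η b y
        + (1 - t) ^ 2 * nonDetection a * nonDetection b := by
  cases a <;> cases b <;>
    simp only [effDist, effMarginal, nonDetection_none, nonDetection_some] <;> ring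

variable [Fintype A] [Fintype B]

lemma sum_marginal_fst_eq_one (hnorm : ∀ x y, ∑ a : A, ∑ b : B, p a b x y = 1)
    (hA : ∀ a x y, pA a x = ∑ b : B, p a b x y) (x : X) (y : Y) : ∑ a, pA a x = 1 := by
  simp only [hA _ _ y, hnorm]

lemma sum_marginal_snd_eq_one (hnorm : ∀ x y, ∑ a : A, ∑ b : B, p a b x y = 1)
    (hB : ∀ b x y, pB b y = ∑ a : A, p a b x y) (x : X) (y : Y) : ∑ b, pB b y = 1 := by
  simp only [hB _ x, sum_comm (γ := B), hnorm]

lemma sum_effDist_snd (hnorm : ∀ x y, ∑ a : A, ∑ b : B, p a b x y = 1)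
    (hA : ∀ a x y, pA a x = ∑ b : B, p a b x y) (hB : ∀ b x y, pB b y = ∑ a : A, p a b x y)
    (η : ℝ) (a : Option A) (x : X) (y : Y) :
    ∑ b, effDist p pA pB η a b x y = effMarginal pA η a x := by
  cases a with
  | none =>
    simp only [Fintype.sum_option, effDist, effMarginal, ← mul_sum,
      sum_marginal_snd_eq_one p pB hnorm hB x y]
    ring
  | some a =>
    simp only [Fintype.sum_option, effDist, effMarginal, ← mul_sum, ← hA a x y]
    ring

lemma sum_effDist_fst (hnorm : ∀ x y, ∑ a : A, ∑ b : B, p a b x y = 1)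
    (hA : ∀ a x y, pA a x = ∑ b : B, p a b x y) (hB : ∀ b x y, pB b y = ∑ a : A, p a b x y)
    (η : ℝ) (b : Option B) (x : X) (y : Y) :
    ∑ a, effDist p pA pB η a b x y = effMarginal pB η b y := by
  cases b with
  | none =>
    simp only [Fintype.sum_option, effDist, effMarginal, ← mul_sum,
      sum_marginal_fst_eq_one p pA hnorm hA x y]
    ring
  | some b =>
    simp only [Fintype.sum_option, effDist, effMarginal, ← mul_sum, ← hB b x y]
    ring

end Efficiency

theorem lhv_monotone_in_efficiency_general {A B X Y : Type} [Fintype A] [Fintype B]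
    (p : A → B → X → Y → ℝ) (pA : A → X → ℝ) (pB : B → Y → ℝ)
    (hnorm : ∀ x y, ∑ a : A, ∑ b : B, p a b x y = 1)
    (hA : ∀ a x y, pA a x = ∑ b : B, p a b x y)
    (hB : ∀ b x y, pB b y = ∑ a : A, p a b x y)
    (η1 η2 : ℝ) (h1 : 0 < η1) (h12 : η1 < η2)
    (hLHV : IsLHV (effDist p pA pB η2)) :
    IsLHV (effDist p pA pB η1) := by
  obtain ⟨n, μ, pa, pb, hμ0, hμ1, hpa0, hpa1, hpb0, hpb1, hq⟩ := hLHV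
  have hη2 : 0 < η2 := h1.trans h12
  set t := η1 / η2
  have ht0 : 0 ≤ t := by positivity
  have ht1 : t ≤ 1 := (div_le_one hη2).2 h12.le
  refine ⟨n, μ, thinResponse t pa, thinResponse t pb, hμ0, hμ1,
    thinResponse_nonneg ht0 ht1 hpa0, sum_thinResponse t hpa1,
    thinResponse_nonneg ht0 ht1 hpb0, sum_thinResponse t hpb1, fun a b x y => ?_⟩
  rw [sum_mul_thinResponse_mul_thinResponse, hμ1, mul_one, ← hq,
    ← lhv_marginal_fst hq hpb1 a x y, ← lhv_marginal_snd hq hpa1 b x y,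
    sum_effDist_snd p pA pB hnorm hA hB, sum_effDist_fst p pA pB hnorm hA hB,
    ← effDist_mul, div_mul_cancel₀ η1 hη2.ne']

theorem lhv_monotone_in_efficiency {A B X Y : Type} [Fintype A] [Fintype B]
    (p : A → B → X → Y → ℝ) (pA : A → X → ℝ) (pB : B → Y → ℝ)
    (hpos : ∀ a b x y, 0 ≤ p a b x y)
    (hnorm : ∀ x y, ∑ a : A, ∑ b : B, p a b x y = 1)
    (hA : ∀ a x y, pA a x = ∑ b : B, p a b x y)
    (hB : ∀ b x y, pB b y = ∑ a : A, p a b x y)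
    (η1 η2 : ℝ) (h1 : 0 < η1) (h12 : η1 < η2) (h2 : η2 ≤ 1)
    (hLHV : IsLHV (effDist p pA pB η2)) :
    IsLHV (effDist p pA pB η1) :=
  lhv_monotone_in_efficiency_general p pA pB hnorm hA hB η1 η2 h1 h12 hLHV
end

section
/- Let P be a prime with P ≥ max(M_A, M_B). The value of the Bell functional I (defined via f, g, h as in the paper) on the efficiency-η no-signaling strategy p(a,b|x,y) = (1/P)·1[a+b ≡ xy mod P] equals η²(M_A M_B − 1) − η(M_A + M_B − 2). -/
/-- Bell coefficient for the bipartite inequality: `1` if `(x>1 ∨ y>1)` and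
`a+b ≡ xy (mod P)`, `0` if `x=y=1` and `a+b ≡ xy`, `-P⁴` otherwise;
coefficients involving Φ (= `none`) vanish. -/
def bellCoeff (P : ℕ) : Option ℕ → Option ℕ → ℕ → ℕ → ℝ
  | some a, some b, x, y =>
      if (a + b) % P = (x * y) % P then (if x = 1 ∧ y = 1 then 0 else 1)
      else -(P : ℝ) ^ 4
  | _, _, _, _ => 0

/-- The efficiency-`η` version of the no-signaling strategy
`p(a,b|x,y) = (1/P)·1[a+b ≡ xy mod P]` (whose marginals are uniform `1/P`). -/
noncomputable def nsEta (P : ℕ) (η : ℝ) : Option ℕ → Option ℕ → ℕ → ℕ → ℝ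
  | some a, some b, x, y =>
      η ^ 2 * (if (a + b) % P = (x * y) % P then 1 / (P : ℝ) else 0)
  | some _, none, _, _ => η * (1 - η) * (1 / (P : ℝ))
  | none, some _, _, _ => η * (1 - η) * (1 / (P : ℝ))
  | none, none, _, _ => (1 - η) ^ 2

/-- Outcome alphabet `{0,…,P−1} ∪ {Φ}`. -/
def optOut (P : ℕ) : Finset (Option ℕ) := insert none ((Finset.range P).image some)

/-!
For each `a` and `r` exactly one `b < P` has `a + b ≡ r (mod P)`, so `p` lives on
`a + b ≡ xy` and has uniform marginals `1/P`. Hence the `-P⁴` coefficients only meet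
probability zero, every input pair other than `(1, 1)` contributes `η²`, and every marginal
term contributes `η` (the `η²/P` of the detected partner plus the `η(1-η)/P` of `Φ`).
-/

open Finset

section Counting

variable {P : ℕ}

lemma card_filter_add_mod_eq (hP : 0 < P) (a r : ℕ) :
    #{b ∈ range P | (a + b) % P = r % P} = 1 := by
  have : NeZero P := ⟨hP.ne'⟩
  rw [card_eq_one]
  refine ⟨((r : ZMod P) - a).val, ?_⟩
  ext b
  simp only [mem_filter, mem_range, mem_singleton, ← ZMod.natCast_eq_natCast_iff']
  push_cast
  constructor
  · rintro ⟨hb, h⟩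
    rw [← ZMod.val_cast_of_lt hb, ← h, add_sub_cancel_left]
  · rintro rfl
    simp [ZMod.val_lt]

lemma sum_range_ite_add_mod_eq {M : Type*} [AddCommMonoid M] (hP : 0 < P) (a r : ℕ) (v : M) :
    ∑ b ∈ range P, (if (a + b) % P = r % P then v else 0) = v := by
  rw [← sum_filter, sum_const, card_filter_add_mod_eq hP, one_smul]

lemma sum_optOut {M : Type*} [AddCommMonoid M] (f : Option ℕ → M) :
    ∑ a ∈ optOut P, f a = f none + ∑ a ∈ range P, f (some a) := by
  rw [optOut, sum_insert (by simp), sum_image (by simp)]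

end Counting

section Strategy

variable {P : ℕ}

lemma bellCoeff_none_left (b : Option ℕ) (x y : ℕ) : bellCoeff P none b x y = 0 := rfl

lemma bellCoeff_some_none (a x y : ℕ) : bellCoeff P (some a) none x y = 0 := rfl

variable (η : ℝ)

lemma bellCoeff_mul_nsEta_some (a b x y : ℕ) :
    bellCoeff P (some a) (some b) x y * nsEta P η (some a) (some b) x y
      = if (a + b) % P = x * y % P then (if x = 1 ∧ y = 1 then 0 else η ^ 2) / P else 0 := by
  simp only [bellCoeff, nsEta]
  split_ifs <;> ring

lemma sum_bellCoeff_mul_nsEta (hP : 0 < P) (x y : ℕ) :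
    ∑ a ∈ optOut P, ∑ b ∈ optOut P, bellCoeff P a b x y * nsEta P η a b x y
      = if x = 1 ∧ y = 1 then 0 else η ^ 2 := by
  have hP' : (P : ℝ) ≠ 0 := by positivity
  simp only [sum_optOut, bellCoeff_none_left, bellCoeff_some_none, zero_mul, zero_add,
    sum_const_zero, bellCoeff_mul_nsEta_some, sum_range_ite_add_mod_eq hP, sum_const,
    card_range, nsmul_eq_mul]
  field_simp

lemma sum_nsEta_some_left (hP : 0 < P) (a x y : ℕ) :
    ∑ b ∈ optOut P, nsEta P η (some a) b x y = η / P := by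
  simp only [sum_optOut, nsEta, mul_ite, mul_zero, sum_range_ite_add_mod_eq hP]
  ring

lemma sum_nsEta_some_right (hP : 0 < P) (b x y : ℕ) :
    ∑ a ∈ optOut P, nsEta P η a (some b) x y = η / P := by
  simp only [sum_optOut, nsEta, mul_ite, mul_zero, add_comm _ b, sum_range_ite_add_mod_eq hP]
  ring

end Strategy

lemma sum_Icc_one_Icc_one_ite {m n : ℕ} (hm : 1 ≤ m) (hn : 1 ≤ n) (c : ℝ) :
    ∑ x ∈ Icc 1 m, ∑ y ∈ Icc 1 n, (if x = 1 ∧ y = 1 then 0 else c) = c * (m * n - 1) := by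
  have h : ∀ x y : ℕ, (if x = 1 ∧ y = 1 then 0 else c)
      = c - if x = 1 then (if y = 1 then c else 0) else 0 := by
    intro x y; split_ifs <;> simp_all
  simp [h, sum_sub_distrib, hm, hn]
  ring

lemma sum_Icc_two_const {m : ℕ} (hm : 1 ≤ m) (c : ℝ) :
    ∑ _x ∈ Icc 2 m, c = c * (m - 1) := by
  rw [sum_const, Nat.card_Icc, nsmul_eq_mul, mul_comm]
  congr 1
  rw [Nat.cast_sub (by omega)]
  push_cast
  ring

theorem bell_value_of_ns_strategy_general (P MA MB : ℕ) (hP : P.Prime)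
    (hA : 2 ≤ MA) (hB : 2 ≤ MB)
    (η : ℝ) :
    (∑ x ∈ Finset.Icc 1 MA, ∑ y ∈ Finset.Icc 1 MB,
        ∑ a ∈ optOut P, ∑ b ∈ optOut P, bellCoeff P a b x y * nsEta P η a b x y)
      - (∑ x ∈ Finset.Icc 2 MA, ∑ a ∈ Finset.range P,
          ∑ b ∈ optOut P, nsEta P η (some a) b x 1)
      - (∑ y ∈ Finset.Icc 2 MB, ∑ b ∈ Finset.range P,
          ∑ a ∈ optOut P, nsEta P η a (some b) 1 y)
    = η ^ 2 * ((MA : ℝ) * MB - 1) - η * ((MA : ℝ) + MB - 2) := by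
  have hP0 := hP.pos
  have hP' : (P : ℝ) ≠ 0 := by positivity
  simp only [sum_bellCoeff_mul_nsEta η hP0, sum_nsEta_some_left η hP0,
    sum_nsEta_some_right η hP0, sum_const, card_range, nsmul_eq_mul,
    mul_div_cancel₀ η hP', sum_Icc_one_Icc_one_ite (by omega : 1 ≤ MA) (by omega : 1 ≤ MB),
    sum_Icc_two_const (by omega : 1 ≤ MA), sum_Icc_two_const (by omega : 1 ≤ MB)]
  ring

theorem bell_value_of_ns_strategy (P MA MB : ℕ) (hP : P.Prime)
    (hA : 2 ≤ MA) (hB : 2 ≤ MB) (hPA : MA ≤ P) (hPB : MB ≤ P)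
    (η : ℝ) (hη : η ∈ Set.Icc (0 : ℝ) 1) :
    (∑ x ∈ Finset.Icc 1 MA, ∑ y ∈ Finset.Icc 1 MB,
        ∑ a ∈ optOut P, ∑ b ∈ optOut P, bellCoeff P a b x y * nsEta P η a b x y)
      - (∑ x ∈ Finset.Icc 2 MA, ∑ a ∈ Finset.range P,
          ∑ b ∈ optOut P, nsEta P η (some a) b x 1)
      - (∑ y ∈ Finset.Icc 2 MB, ∑ b ∈ Finset.range P,
          ∑ a ∈ optOut P, nsEta P η a (some b) 1 y)
    = η ^ 2 * ((MA : ℝ) * MB - 1) - η * ((MA : ℝ) + MB - 2) :=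
  bell_value_of_ns_strategy_general P MA MB hP hA hB η
end

section
/- Let P be a prime with P > max(M_1,...,M_N), N ≥ 2. Define the multipartite Bell functional I with coefficients f(a⃗,x⃗) = 1 if (∃t, x_t ≠ 1) and Σa_j ≡ Πx_i (mod P); f = 0 if all x_t = 1 and Σa_i ≡ Πx_i; f = −P^{2N} otherwise; and penalty terms g_i(a_i, x_i) = −1 for x_i > 1 (0 for x_i = 1). Then for every deterministic local strategy (F_1,...,F_N) with F_i: {1,...,M_i} → {0,...,P−1} ∪ {Φ}, the value of I is at most 0. -/
/-- Multipartite Bell coefficient: for fully detected outputs `a⃗`,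
`1` if `(∃t, x_t ≠ 1)` and `Σa_j ≡ Πx_i (mod P)`, `0` if all `x_t = 1` and
`Σa_i ≡ Πx_i`, `-P^{2N}` otherwise; any Φ (= `none`) output gives `0`. -/
def multiBellCoeff (P N : ℕ) (av : Fin N → Option ℕ) (x : Fin N → ℕ) : ℝ :=
  if ∀ i, (av i).isSome then
    (if (∑ i, (av i).getD 0) % P = (∏ i, x i) % P then
        (if ∀ i, x i = 1 then 0 else 1)
      else -(P : ℝ) ^ (2 * N))
  else 0

/-!
Call an input of a party detected when the party's output on it is not Φ. If two parties
`i ≠ j` each have two detected inputs `u ≠ u'` and `v ≠ v'`, and every party has some detected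
input, then with the other parties' inputs held fixed the congruences `Σ a ≡ Π x (mod P)` at
`(u, v), (u, v'), (u', v), (u', v')` would give `(u - u') (v - v') c ≡ 0` with `c` a product of
inputs in `[1, P)`; as `P` is a prime exceeding every input this is impossible. So some fully
detected input carries `-P^{2N}`, which outweighs the fewer than `P^N` coefficients equal to `1`.
Otherwise all but one party `j` has at most one detected input, so a fully detected input vector
is determined by its `j`-th entry, and those different from `(1, …, 1)` are paid for by the
penalty terms.
-/

open Finset Function

@[to_additive]
theorem prod_apply_update_update {ι α β : Type*} [Fintype ι] [DecidableEq ι] [CommMonoid β]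
    (h : ι → α → β) (x : ι → α) {i j : ι} (hij : i ≠ j) (a b : α) :
    ∏ k, h k (update (update x i a) j b k) = h i a * h j b * ∏ k ∈ {i, j}ᶜ, h k (x k) := by
  rw [← prod_mul_prod_compl {i, j}, prod_pair hij]
  congr 1
  · simp [update_of_ne hij]
  · refine prod_congr rfl fun k hk => ?_
    simp only [mem_compl, mem_insert, mem_singleton, not_or] at hk
    rw [update_of_ne hk.2, update_of_ne hk.1]

theorem exists_mem_piFinset_sum_ne_prod {ι α K : Type*} [Fintype ι] [DecidableEq ι]
    [CommRing K] [IsDomain K] (g h : ι → α → K) {s : ι → Finset α}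
    (hs : (Fintype.piFinset s).Nonempty) (h0 : ∀ k, ∀ t ∈ s k, h k t ≠ 0)
    (hinj : ∀ k, Set.InjOn (h k) (s k)) {i j : ι} (hij : i ≠ j)
    (hi : 1 < #(s i)) (hj : 1 < #(s j)) :
    ∃ x ∈ Fintype.piFinset s, ∑ k, g k (x k) ≠ ∏ k, h k (x k) := by
  obtain ⟨x, hx⟩ := hs
  rw [Fintype.mem_piFinset] at hx
  obtain ⟨u, hu, u', hu', huu'⟩ := one_lt_card.mp hi
  obtain ⟨v, hv, v', hv', hvv'⟩ := one_lt_card.mp hj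
  by_contra! hall
  have key : ∀ a ∈ s i, ∀ b ∈ s j, g i a + g j b + ∑ k ∈ {i, j}ᶜ, g k (x k)
      = h i a * h j b * ∏ k ∈ {i, j}ᶜ, h k (x k) := by
    intro a ha b hb
    rw [← sum_apply_update_update g x hij, ← prod_apply_update_update h x hij]
    refine hall _ (Fintype.mem_piFinset.mpr fun k => ?_)
    simp only [update_apply]
    split_ifs <;> subst_vars <;> simp_all
  have hC : ∏ k ∈ {i, j}ᶜ, h k (x k) ≠ 0 := prod_ne_zero_iff.mpr fun k _ => h0 k _ (hx k)
  -- the additive terms cancel in this alternating sum, the multiplicative ones factor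
  have hzero : (h i u - h i u') * (h j v - h j v') * ∏ k ∈ {i, j}ᶜ, h k (x k) = 0 := by
    linear_combination key u hu v' hv' + key u' hu' v hv - key u hu v hv - key u' hu' v' hv'
  simp only [mul_eq_zero, sub_eq_zero, hC, or_false] at hzero
  exact hzero.elim (huu' <| hinj i hu hu' ·) (hvv' <| hinj j hv hv' ·)

theorem sum_nonpos_of_le_one_of_le_neg_card {α R : Type*} [CommRing R] [LinearOrder R]
    [IsStrictOrderedRing R] {s : Finset α} {f : α → R} (h1 : ∀ x ∈ s, f x ≤ 1) {b : α}
    (hb : b ∈ s) (hfb : f b ≤ -#s) : ∑ x ∈ s, f x ≤ 0 := by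
  classical
  rw [← add_sum_erase s f hb]
  have hrest : ∑ x ∈ s.erase b, f x ≤ #(s.erase b) := by
    simpa using sum_le_sum fun x hx => h1 x (mem_of_mem_erase hx)
  have hcard : (#(s.erase b) : R) + 1 = #s := by
    rw [← Nat.cast_add_one, card_erase_add_one hb]
  linarith

theorem card_piFinset_erase_le_sum_card_erase {ι α : Type*} [Fintype ι] [DecidableEq ι]
    [DecidableEq α] (s : ι → Finset α) (a : ι → α) {j : ι} (hj : ∀ i ≠ j, #(s i) ≤ 1) :
    #((Fintype.piFinset s).erase a) ≤ ∑ i, #((s i).erase (a i)) := by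
  have hcard : #(Fintype.piFinset s) ≤ #(s j) := by
    rw [Fintype.card_piFinset, Fintype.prod_eq_mul_prod_compl j]
    calc #(s j) * ∏ i ∈ {j}ᶜ, #(s i) ≤ #(s j) * 1 :=
          Nat.mul_le_mul_left _ <| prod_le_one (fun _ _ => Nat.zero_le _)
            fun i hi => hj i (by simpa using hi)
      _ = #(s j) := mul_one _
  have hj_le : #((s j).erase (a j)) ≤ ∑ i, #((s i).erase (a i)) :=
    single_le_sum (f := fun i => #((s i).erase (a i))) (fun i _ => Nat.zero_le _) (mem_univ j)
  have hj_erase : #(s j) - 1 ≤ #((s j).erase (a j)) := pred_card_le_card_erase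
  by_cases ha : a ∈ Fintype.piFinset s
  · rw [card_erase_of_mem ha]
    omega
  obtain ⟨k, hk⟩ : ∃ k, a k ∉ s k := by simpa [Fintype.mem_piFinset] using ha
  rw [erase_eq_of_notMem ha]
  obtain rfl | hkj := eq_or_ne k j
  · rw [erase_eq_of_notMem hk] at hj_le
    omega
  obtain hempty | hne := (s k).eq_empty_or_nonempty
  · simp [Fintype.piFinset_eq_empty.mpr ⟨k, hempty⟩]
  have hpair : #((s j).erase (a j)) + #((s k).erase (a k)) ≤ ∑ i, #((s i).erase (a i)) := by
    rw [← sum_pair (f := fun i => #((s i).erase (a i))) hkj.symm]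
    exact sum_le_sum_of_subset (subset_univ _)
  rw [erase_eq_of_notMem hk] at hpair
  have := hne.card_pos
  omega

theorem ZMod.natCast_injOn_Iio (n : ℕ) : Set.InjOn (Nat.cast : ℕ → ZMod n) (Set.Iio n) :=
  fun a ha b hb hab => by rw [← ZMod.val_natCast_of_lt ha, hab, ZMod.val_natCast_of_lt hb]

theorem exists_forall_ne_card_le_one {ι α : Type*} [Nonempty ι] (s : ι → Finset α)
    (h : ∀ i j, i ≠ j → 1 < #(s i) → #(s j) ≤ 1) : ∃ j, ∀ i ≠ j, #(s i) ≤ 1 := by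
  by_cases hbig : ∃ j, 1 < #(s j)
  · obtain ⟨j, hj⟩ := hbig
    exact ⟨j, fun i hi => h j i hi.symm hj⟩
  · push Not at hbig
    exact ⟨Classical.arbitrary ι, fun i _ => hbig i⟩

section Bell

variable {P N : ℕ}

def detectedInputs (M : Fin N → ℕ) (F : Fin N → ℕ → Option ℕ) (i : Fin N) : Finset ℕ :=
  (Icc 1 (M i)).filter fun t => F i t ≠ none

theorem filter_Icc_two_ne_none_eq_erase (M : Fin N → ℕ) (F : Fin N → ℕ → Option ℕ) (i : Fin N) :
    (Icc 2 (M i)).filter (fun t => F i t ≠ none) = (detectedInputs M F i).erase 1 := by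
  have hIcc : Icc 2 (M i) = (Icc 1 (M i)).erase 1 := by
    ext t
    simp only [mem_Icc, mem_erase]
    omega
  rw [hIcc, filter_erase, detectedInputs]

theorem multiBellCoeff_le_one (av : Fin N → Option ℕ) (x : Fin N → ℕ) :
    multiBellCoeff P N av x ≤ 1 := by
  have : (0 : ℝ) ≤ (P : ℝ) ^ (2 * N) := by positivity
  unfold multiBellCoeff
  split_ifs <;> linarith

theorem multiBellCoeff_eq_neg_of_sum_ne_prod {av : Fin N → Option ℕ} {x : Fin N → ℕ}
    (hsome : ∀ i, (av i).isSome) (hne : ∑ i, ((av i).getD 0 : ZMod P) ≠ ∏ i, (x i : ZMod P)) :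
    multiBellCoeff P N av x = -(P : ℝ) ^ (2 * N) := by
  rw [multiBellCoeff, if_pos hsome, if_neg]
  intro h
  apply hne
  exact_mod_cast (ZMod.natCast_eq_natCast_iff' _ _ P).mpr h

theorem sum_multiBellCoeff_le_card (M : Fin N → ℕ) (F : Fin N → ℕ → Option ℕ) :
    ∑ x ∈ Fintype.piFinset (fun i => Icc 1 (M i)), multiBellCoeff P N (fun i => F i (x i)) x
      ≤ #((Fintype.piFinset (detectedInputs M F)).erase 1) := by
  set T := (Fintype.piFinset (detectedInputs M F)).erase 1
  have hT : T ⊆ Fintype.piFinset (fun i => Icc 1 (M i)) :=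
    (erase_subset _ _).trans (Fintype.piFinset_subset _ _ fun i => filter_subset _ _)
  have hle : ∀ x ∈ Fintype.piFinset (fun i => Icc 1 (M i)),
      multiBellCoeff P N (fun i => F i (x i)) x ≤ if x ∈ T then 1 else 0 := by
    intro x hx
    have hmem : x ∈ T ↔ x ≠ 1 ∧ ∀ i, (F i (x i)).isSome := by
      simp [T, detectedInputs, Fintype.mem_piFinset.mp hx, Option.ne_none_iff_isSome]
    have : (0 : ℝ) ≤ (P : ℝ) ^ (2 * N) := by positivity
    have hone : (∀ i, x i = 1) ↔ x = 1 := funext_iff.symm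
    simp only [hmem, multiBellCoeff, hone]
    split_ifs <;> first | linarith | tauto
  calc _ ≤ ∑ x ∈ Fintype.piFinset (fun i => Icc 1 (M i)), if x ∈ T then (1 : ℝ) else 0 :=
        sum_le_sum hle
    _ = #T := by rw [sum_boole, filter_mem_eq_inter, inter_eq_right.mpr hT]

theorem exists_mem_piFinset_detectedInputs_sum_ne_prod (hP : P.Prime) {M : Fin N → ℕ}
    (hPM : ∀ i, M i < P) (F : Fin N → ℕ → Option ℕ)
    (hne : (Fintype.piFinset (detectedInputs M F)).Nonempty) {i j : Fin N} (hij : i ≠ j)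
    (hi : 1 < #(detectedInputs M F i)) (hj : 1 < #(detectedInputs M F j)) :
    ∃ x ∈ Fintype.piFinset (detectedInputs M F),
      ∑ k, ((F k (x k)).getD 0 : ZMod P) ≠ ∏ k, (x k : ZMod P) := by
  have := Fact.mk hP
  have hIoo : ∀ k, ∀ t ∈ detectedInputs M F k, 0 < t ∧ t < P := fun k t ht => by
    have := mem_Icc.mp (mem_filter.mp ht).1
    exact ⟨this.1, this.2.trans_lt (hPM k)⟩
  have hinj : ∀ k, Set.InjOn (fun t : ℕ => (t : ZMod P)) (detectedInputs M F k) :=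
    fun k a ha b hb => ZMod.natCast_injOn_Iio P (hIoo k a ha).2 (hIoo k b hb).2
  refine exists_mem_piFinset_sum_ne_prod (fun k t => ((F k t).getD 0 : ZMod P))
    (fun _ t => (t : ZMod P)) hne (fun k t ht h0 => ?_) hinj hij hi hj
  have h0' : t = 0 := ZMod.natCast_injOn_Iio P (hIoo k t ht).2
    ((hIoo k t ht).1.trans (hIoo k t ht).2) (by simpa using h0)
  exact (hIoo k t ht).1.ne' h0'

theorem sum_multiBellCoeff_nonpos_of_sum_ne_prod (hP : 0 < P) {M : Fin N → ℕ}
    (hPM : ∀ i, M i ≤ P) (F : Fin N → ℕ → Option ℕ) {x : Fin N → ℕ}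
    (hx : x ∈ Fintype.piFinset (detectedInputs M F))
    (hne : ∑ k, ((F k (x k)).getD 0 : ZMod P) ≠ ∏ k, (x k : ZMod P)) :
    ∑ x ∈ Fintype.piFinset (fun i => Icc 1 (M i)), multiBellCoeff P N (fun i => F i (x i)) x
      ≤ 0 := by
  simp only [Fintype.mem_piFinset, detectedInputs, mem_filter] at hx
  have hcard : #(Fintype.piFinset fun i => Icc 1 (M i)) ≤ P ^ (2 * N) :=
    calc #(Fintype.piFinset fun i => Icc 1 (M i)) = ∏ i, M i := by simp [Fintype.card_piFinset]
      _ ≤ P ^ N := by simpa using prod_le_pow_card univ M P fun i _ => hPM i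
      _ ≤ P ^ (2 * N) := Nat.pow_le_pow_right hP (by omega)
  refine sum_nonpos_of_le_one_of_le_neg_card (fun y _ => multiBellCoeff_le_one _ _)
    (Fintype.mem_piFinset.mpr fun i => (hx i).1) ?_
  rw [multiBellCoeff_eq_neg_of_sum_ne_prod (fun i => Option.isSome_iff_ne_none.mpr (hx i).2) hne]
  exact neg_le_neg (by exact_mod_cast hcard)

end Bell

theorem multipartite_deterministic_nonpositive_general (P N : ℕ) (hP : P.Prime) (hN : 2 ≤ N)
    (M : Fin N → ℕ) (hPM : ∀ i, M i < P)
    (F : Fin N → ℕ → Option ℕ) :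
    (∑ x ∈ Fintype.piFinset fun i => Finset.Icc 1 (M i),
        multiBellCoeff P N (fun i => F i (x i)) x)
      - ∑ i, (((Finset.Icc 2 (M i)).filter (fun t => F i t ≠ none)).card : ℝ) ≤ 0 := by
  simp_rw [sub_nonpos, filter_Icc_two_ne_none_eq_erase]
  have hpenalty : 0 ≤ ∑ i, (#((detectedInputs M F i).erase 1) : ℝ) := by positivity
  have hbound := sum_multiBellCoeff_le_card (P := P) M F
  by_cases hbig : ∃ i j, i ≠ j ∧ 1 < #(detectedInputs M F i) ∧ 1 < #(detectedInputs M F j)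
  · obtain ⟨i, j, hij, hi, hj⟩ := hbig
    obtain hempty | hne := (Fintype.piFinset (detectedInputs M F)).eq_empty_or_nonempty
    · rw [hempty, erase_empty, card_empty, Nat.cast_zero] at hbound
      exact hbound.trans hpenalty
    · obtain ⟨x, hx, hmismatch⟩ :=
        exists_mem_piFinset_detectedInputs_sum_ne_prod hP hPM F hne hij hi hj
      exact (sum_multiBellCoeff_nonpos_of_sum_ne_prod hP.pos (fun i => (hPM i).le) F hx
        hmismatch).trans hpenalty
  · push Not at hbig
    have : Nonempty (Fin N) := ⟨⟨0, by omega⟩⟩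
    obtain ⟨j, hj⟩ := exists_forall_ne_card_le_one _ hbig
    exact hbound.trans (by exact_mod_cast card_piFinset_erase_le_sum_card_erase _ 1 hj)

theorem multipartite_deterministic_nonpositive (P N : ℕ) (hP : P.Prime) (hN : 2 ≤ N)
    (M : Fin N → ℕ) (hM : ∀ i, 2 ≤ M i) (hPM : ∀ i, M i < P)
    (F : Fin N → ℕ → Option ℕ)
    (hF : ∀ i x a, F i x = some a → a < P) :
    (∑ x ∈ Fintype.piFinset fun i => Finset.Icc 1 (M i),
        multiBellCoeff P N (fun i => F i (x i)) x)
      - ∑ i, (((Finset.Icc 2 (M i)).filter (fun t => F i t ≠ none)).card : ℝ) ≤ 0 :=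
  multipartite_deterministic_nonpositive_general P N hP hN M hPM F
end

section
/- The value of the multipartite Bell functional I on the efficiency-η version of the no-signaling strategy p(a⃗|x⃗) = (1/P^{N−1})·1[Σa_i ≡ Πx_i mod P] equals η^N(M_1···M_N − 1) − η(M_1 + ··· + M_N − N). -/
/-- Efficiency-`η` version of the multipartite no-signaling strategy
`p(a⃗|x⃗) = (1/P^{N−1})·1[Σa_i ≡ Πx_i mod P]`: with `k` detected parties the
probability is `η^k (1−η)^{N−k}` times the `k`-party marginal of `p`
(which is `1/P^k` for `k < N`). -/
noncomputable def multiNsEta (P N : ℕ) (η : ℝ) (av : Fin N → Option ℕ)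
    (x : Fin N → ℕ) : ℝ :=
  let k := (Finset.univ.filter fun i => (av i).isSome).card
  if ∀ i, (av i).isSome then
    η ^ N * (if (∑ i, (av i).getD 0) % P = (∏ i, x i) % P then
        1 / (P : ℝ) ^ (N - 1) else 0)
  else η ^ k * (1 - η) ^ (N - k) * (1 / (P : ℝ) ^ k)

/-!
Off the all-detected event the efficiency-`η` distribution is a product of independent
single-party distributions: each party is detected with probability `η` and then answers
uniformly in `range P`. Once all outputs but one are fixed, exactly one residue of the remaining
output satisfies `Σ aᵢ ≡ Π xᵢ (mod P)`, so exactly a `1/P` fraction of output tuples satisfies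
the constraint, even with one output held fixed as long as another one stays free. Hence each
input `x ≠ 1` contributes `η^N` to the Bell sum, and the all-detected part of every one-party marginal
agrees with that of the product distribution, so every marginal equals `η/P`.
-/

open Finset Fintype Function

section Counting

variable {ι : Type*} [Fintype ι] [DecidableEq ι] {P : ℕ}

theorem sum_natCast_update (a : ι → ℕ) (i : ι) (r : ℕ) :
    ∑ j, ((update a i r j : ℕ) : ZMod P) = ∑ j, (a j : ZMod P) - a i + r := by
  rw [← Nat.cast_sum, sum_update_of_mem (mem_univ i), sdiff_singleton_eq_erase,
    ← add_sum_erase _ (fun j => (a j : ZMod P)) (mem_univ i)]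
  push_cast
  ring

theorem card_filter_piFinset_sum_mod_eq_mul [NeZero P] (t : ι → Finset ℕ) {i₀ : ι}
    (ht : t i₀ = range P) (c : ℕ) :
    #{a ∈ piFinset t | (∑ j, a j) % P = c % P} * P = #(piFinset t) := by
  have h0 : 0 ∈ t i₀ := by simp [ht, NeZero.pos]
  -- `update a i₀ 0` forgets the pivot output, which the congruence determines within `range P`.
  have hfix : #{a ∈ piFinset t | (∑ j, a j) % P = c % P} = #{a ∈ piFinset t | a i₀ = 0} := by
    simp_rw [← ZMod.natCast_eq_natCast_iff']
    refine card_nbij' (fun a => update a i₀ 0)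
      (fun b => update b i₀ ((c : ZMod P) - ∑ j, (b j : ZMod P)).val) ?_ ?_ ?_ ?_
    · intro a ha
      simp only [coe_filter, Set.mem_ofPred_eq, mem_piFinset] at ha ⊢
      simpa [forall_update_iff, h0] using fun j _ => ha.1 j
    · intro b hb
      simp only [coe_filter, Set.mem_ofPred_eq, mem_piFinset] at hb ⊢
      simpa [forall_update_iff, sum_natCast_update, hb.2, ht, ZMod.val_lt]
        using fun j _ => hb.1 j
    · intro a ha
      simp only [coe_filter, Set.mem_ofPred_eq, mem_piFinset] at ha
      have hlt : a i₀ < P := by simpa [ht] using ha.1 i₀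
      dsimp only
      rw [sum_natCast_update, ← Nat.cast_sum, ha.2, Nat.cast_zero, add_zero, sub_sub_cancel,
        ZMod.val_cast_of_lt hlt, update_idem, update_eq_self]
    · intro b hb
      simp only [coe_filter, Set.mem_ofPred_eq, mem_piFinset] at hb
      simp [← hb.2]
  rw [hfix, card_filter_piFinset_eq_of_mem t i₀ h0, card_piFinset,
    ← prod_erase_mul _ _ (mem_univ i₀), ht, Finset.card_range]

theorem sum_piFinset_ite_sum_mod_eq [NeZero P] (t : ι → Finset ℕ) {i₀ : ι} (ht : t i₀ = range P)
    (c : ℕ) (K : ℝ) :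
    ∑ a ∈ piFinset t, (if (∑ j, a j) % P = c % P then K else 0) = #(piFinset t) / P * K := by
  rw [sum_ite, sum_const_zero, add_zero, sum_const, nsmul_eq_mul,
    ← card_filter_piFinset_sum_mod_eq_mul t ht c]
  have : (P : ℝ) ≠ 0 := mod_cast NeZero.ne P
  push_cast
  field_simp

end Counting

section Outcomes

variable {ι : Type*} [Fintype ι] [DecidableEq ι] {P : ℕ}

theorem sum_filter_piFinset_optOut_forall_isSome {M : Type*} [AddCommMonoid M]
    [DecidablePred fun av : ι → Option ℕ => ∀ j, (av j).isSome] (F : (ι → Option ℕ) → M) :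
    ∑ av ∈ piFinset (fun _ : ι => optOut P) with ∀ j, (av j).isSome, F av
      = ∑ a ∈ piFinset (fun _ : ι => range P), F (fun j => some (a j)) := by
  have hdet : {av ∈ piFinset (fun _ : ι => optOut P) | ∀ j, (av j).isSome}
      = piFinset (fun _ : ι => (range P).image some) := by
    ext av
    simp only [mem_filter, mem_piFinset, optOut, mem_insert, mem_image, mem_range,
      Option.isSome_iff_exists]
    constructor
    · rintro ⟨hout, hsome⟩ j
      obtain ⟨b, hb⟩ := hsome j
      simpa [hb] using hout j
    · exact fun h => ⟨fun j => .inr (h j), fun j => (h j).imp fun b hb => hb.2.symm⟩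
  rw [hdet, piFinset_image,
    sum_image fun a _ b _ h => funext fun j => Option.some_injective _ (congrFun h j)]

theorem sum_filter_eq_some_ite_forall_isSome {M : Type*} [AddCommMonoid M]
    [DecidablePred fun av : ι → Option ℕ => ∀ j, (av j).isSome] (i : ι) {a₀ : ℕ}
    (ha₀ : a₀ < P) (F : (ι → Option ℕ) → M) :
    ∑ av ∈ piFinset (fun _ : ι => optOut P) with av i = some a₀,
        (if ∀ j, (av j).isSome then F av else 0)
      = ∑ a ∈ piFinset (update (fun _ : ι => range P) i {a₀}), F (fun j => some (a j)) := by
  calc _ = ∑ av ∈ piFinset (fun _ : ι => optOut P) with ∀ j, (av j).isSome,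
        (if av i = some a₀ then F av else 0) := by
        simp only [sum_filter, ← ite_and, and_comm]
    _ = _ := by
        rw [sum_filter_piFinset_optOut_forall_isSome, ← sum_filter,
          piFinset_update_singleton_eq_filter_piFinset_eq _ i (mem_range.2 ha₀)]
        simp only [Option.some_inj]

end Outcomes

section Strategy

variable {P N : ℕ} {η : ℝ}

noncomputable def detectionWeight (P : ℕ) (η : ℝ) (o : Option ℕ) : ℝ :=
  if o.isSome then η / P else 1 - η

theorem sum_optOut_detectionWeight [NeZero P] : ∑ o ∈ optOut P, detectionWeight P η o = 1 := by
  have : (P : ℝ) ≠ 0 := mod_cast NeZero.ne P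
  rw [optOut, sum_insert (by simp), sum_image (by simp)]
  simp only [detectionWeight, Option.isSome_none, Option.isSome_some, Bool.false_eq_true,
    if_false, if_true, sum_const, Finset.card_range, nsmul_eq_mul]
  field_simp
  ring

theorem sum_filter_eq_some_prod_detectionWeight {ι : Type*} [Fintype ι] [DecidableEq ι]
    [NeZero P] (i : ι) {a₀ : ℕ} (ha₀ : a₀ < P) :
    ∑ av ∈ piFinset (fun _ : ι => optOut P) with av i = some a₀,
      ∏ j, detectionWeight P η (av j) = η / P := by
  rw [← piFinset_update_singleton_eq_filter_piFinset_eq (fun _ => optOut P) i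
      (by simp [optOut, ha₀]),
    ← prod_univ_sum, Fintype.prod_eq_single i fun j hj => by
      rw [update_of_ne hj, sum_optOut_detectionWeight]]
  simp [detectionWeight]

theorem multiNsEta_eq_prod_detectionWeight {av : Fin N → Option ℕ} (x : Fin N → ℕ)
    (h : ¬ ∀ j, (av j).isSome) : multiNsEta P N η av x = ∏ j, detectionWeight P η (av j) := by
  have hk : #{j | ¬(av j).isSome} = N - #{j | (av j).isSome} := by
    have := card_filter_add_card_filter_not (s := univ) fun j : Fin N => (av j).isSome
    simp only [Finset.card_univ, Fintype.card_fin] at this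
    omega
  simp only [multiNsEta, if_neg h, detectionWeight, prod_ite, prod_const, div_pow, hk]
  ring

theorem sum_filter_eq_some_multiNsEta [NeZero P] (hN : 2 ≤ N) (i : Fin N) {a₀ : ℕ} (ha₀ : a₀ < P)
    (x : Fin N → ℕ) :
    ∑ av ∈ piFinset (fun _ : Fin N => optOut P) with av i = some a₀, multiNsEta P N η av x
      = η / P := by
  have hsplit : ∀ av, multiNsEta P N η av x = ∏ j, detectionWeight P η (av j) +
      if ∀ j, (av j).isSome then
        η ^ N * (if (∑ j, (av j).getD 0) % P = (∏ j, x j) % P then 1 / (P : ℝ) ^ (N - 1) else 0)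
          - ∏ j, detectionWeight P η (av j)
      else 0 := by
    intro av
    by_cases h : ∀ j, (av j).isSome
    · simp only [multiNsEta, if_pos h]
      ring
    · rw [multiNsEta_eq_prod_detectionWeight x h, if_neg h, add_zero]
  have : Nontrivial (Fin N) := Fin.nontrivial_iff_two_le.2 hN
  obtain ⟨i₀, hi₀⟩ := exists_ne i
  rw [sum_congr rfl fun av _ => hsplit av, sum_add_distrib,
    sum_filter_eq_some_prod_detectionWeight i ha₀, add_eq_left,
    sum_filter_eq_some_ite_forall_isSome i ha₀]
  simp only [Option.getD_some, detectionWeight, Option.isSome_some, if_true, prod_const,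
    card_univ, Fintype.card_fin, mul_ite, mul_zero]
  rw [sum_sub_distrib, sum_piFinset_ite_sum_mod_eq _ (i₀ := i₀) (by simp [update_of_ne hi₀]),
    sum_const, nsmul_eq_mul,
    piFinset_update_singleton_eq_filter_piFinset_eq (fun _ => range P) i (mem_range.2 ha₀),
    card_filter_piFinset_const_eq_of_mem _ _ (mem_range.2 ha₀)]
  have hP : (P : ℝ) ≠ 0 := mod_cast NeZero.ne P
  simp only [Finset.card_range, Fintype.card_fin]
  push_cast
  rw [div_pow, ← pow_sub_one_mul (by omega : N ≠ 0) (P : ℝ)]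
  field_simp
  ring

theorem sum_multiBellCoeff_mul_multiNsEta [NeZero P] (hN : 1 ≤ N) (x : Fin N → ℕ) :
    ∑ av ∈ piFinset (fun _ : Fin N => optOut P), multiBellCoeff P N av x * multiNsEta P N η av x
      = (if ∀ i, x i = 1 then 0 else 1) * η ^ N := by
  have hpoint : ∀ av, multiBellCoeff P N av x * multiNsEta P N η av x =
      if ∀ j, (av j).isSome then
        (if (∑ j, (av j).getD 0) % P = (∏ j, x j) % P then
          (if ∀ i, x i = 1 then 0 else 1) * (η ^ N / (P : ℝ) ^ (N - 1)) else 0)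
      else 0 := by
    intro av
    simp only [multiBellCoeff, multiNsEta]
    split_ifs <;> ring
  rw [Finset.sum_congr rfl fun av _ => hpoint av, ← sum_filter,
    sum_filter_piFinset_optOut_forall_isSome]
  simp only [Option.getD_some]
  rw [sum_piFinset_ite_sum_mod_eq (fun _ : Fin N => range P) (i₀ := ⟨0, hN⟩) rfl,
    card_piFinset_const, Finset.card_range]
  have hP : (P : ℝ) ≠ 0 := mod_cast NeZero.ne P
  push_cast
  rw [← pow_sub_one_mul (by omega : N ≠ 0) (P : ℝ)]
  field_simp

end Strategy

theorem sum_piFinset_Icc_ite_forall_eq_one {ι : Type*} [Fintype ι] [DecidableEq ι]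
    [DecidablePred fun x : ι → ℕ => ∀ i, x i = 1] (M : ι → ℕ) (hM : ∀ i, 1 ≤ M i) :
    ∑ x ∈ piFinset (fun i => Icc 1 (M i)), (if ∀ i, x i = 1 then (0 : ℝ) else 1)
      = ∏ i, (M i : ℝ) - 1 := by
  have hone : (1 : ι → ℕ) ∈ piFinset (fun i => Icc 1 (M i)) := by simpa using hM
  have hsplit : ∀ x : ι → ℕ,
      (if ∀ i, x i = 1 then (0 : ℝ) else 1) = 1 - if x = 1 then 1 else 0 := by
    intro x
    simp only [funext_iff, Pi.one_apply]
    split_ifs <;> ring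
  rw [Finset.sum_congr rfl fun x _ => hsplit x, sum_sub_distrib, Finset.sum_ite_eq', if_pos hone]
  simp

theorem multipartite_bell_value_of_ns_strategy_general (P N : ℕ) (hP : P.Prime) (hN : 2 ≤ N)
    (M : Fin N → ℕ) (hM : ∀ i, 2 ≤ M i) (η : ℝ) :
    (∑ x ∈ Fintype.piFinset fun i => Finset.Icc 1 (M i),
        ∑ av ∈ Fintype.piFinset fun _ : Fin N => optOut P,
          multiBellCoeff P N av x * multiNsEta P N η av x)
      - ∑ i, ∑ xi ∈ Finset.Icc 2 (M i), ∑ a ∈ Finset.range P,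
          ∑ av ∈ (Fintype.piFinset fun _ : Fin N => optOut P).filter
              (fun av => av i = some a),
            multiNsEta P N η av (Function.update (fun _ => 1) i xi)
    = η ^ N * ((∏ i, (M i : ℝ)) - 1) - η * ((∑ i, (M i : ℝ)) - N) := by
  have : NeZero P := ⟨hP.ne_zero⟩
  have hpenalty : ∀ i, ∑ xi ∈ Icc 2 (M i), ∑ a ∈ range P,
      ∑ av ∈ piFinset (fun _ : Fin N => optOut P) with av i = some a,
        multiNsEta P N η av (update (fun _ => 1) i xi) = ((M i : ℝ) - 1) * η := by
    intro i
    rw [Finset.sum_congr rfl fun xi _ => Finset.sum_congr rfl fun a ha =>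
      sum_filter_eq_some_multiNsEta hN i (mem_range.1 ha) _]
    have hP0 : (P : ℝ) ≠ 0 := mod_cast NeZero.ne P
    simp only [sum_const, Finset.card_range, Nat.card_Icc, nsmul_eq_mul]
    rw [Nat.cast_sub (by have := hM i; omega)]
    field_simp
    push_cast
    ring
  rw [Finset.sum_congr rfl fun x _ => sum_multiBellCoeff_mul_multiNsEta (by omega) x, ← sum_mul,
    sum_piFinset_Icc_ite_forall_eq_one M fun i => by have := hM i; omega,
    Finset.sum_congr rfl fun i _ => hpenalty i, ← sum_mul, sum_sub_distrib]
  simp only [sum_const, card_univ, Fintype.card_fin, nsmul_eq_mul, mul_one]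
  ring

theorem multipartite_bell_value_of_ns_strategy (P N : ℕ) (hP : P.Prime) (hN : 2 ≤ N)
    (M : Fin N → ℕ) (hM : ∀ i, 2 ≤ M i) (hPM : ∀ i, M i < P)
    (η : ℝ) (hη : η ∈ Set.Icc (0 : ℝ) 1) :
    (∑ x ∈ Fintype.piFinset fun i => Finset.Icc 1 (M i),
        ∑ av ∈ Fintype.piFinset fun _ : Fin N => optOut P,
          multiBellCoeff P N av x * multiNsEta P N η av x)
      - ∑ i, ∑ xi ∈ Finset.Icc 2 (M i), ∑ a ∈ Finset.range P,
          ∑ av ∈ (Fintype.piFinset fun _ : Fin N => optOut P).filter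
              (fun av => av i = some a),
            multiNsEta P N η av (Function.update (fun _ => 1) i xi)
    = η ^ N * ((∏ i, (M i : ℝ)) - 1) - η * ((∑ i, (M i : ℝ)) - N) :=
  multipartite_bell_value_of_ns_strategy_general P N hP hN M hM η
end
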